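/- Let G be any two-by-two game and suppose the pairs of mixed quantum strategies (ν,μ) and (ν',μ') are equivalent as pairs. Then (ν,μ) is a mixed-strategy Nash equilibrium of G^Q if and only if (ν',μ') is a mixed-strategy Nash equilibrium of G^Q. -/

import Mathlib

noncomputable section

open MeasureTheory

local notation "ℍ" => Quaternion ℝ

instance : MeasurableSpace (Quaternion ℝ) := borel _
instance : BorelSpace (Quaternion ℝ) := ⟨rfl⟩

/-- The four real coordinates of a quaternion: `p = π₁(p) + π₂(p)i + π₃(p)j + π₄(p)k`. -/
def piQ (t : Fin 4) (p : ℍ) : ℝ := ![p.re, p.imI, p.imJ, p.imK] t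

/-- The standard inner product on ℍ ≅ ℝ⁴. -/
def qinner (p q : ℍ) : ℝ := ∑ t : Fin 4, piQ t p * piQ t q

/-- The quaternions `i`, `j`, `k`. -/
def qI : ℍ := ⟨0, 1, 0, 0⟩
def qJ : ℍ := ⟨0, 0, 1, 0⟩
def qK : ℍ := ⟨0, 0, 0, 1⟩

/-- A mixed quantum strategy: a Borel probability measure on the unit quaternions. -/
def IsMixed (μ : Measure ℍ) : Prop :=
  IsProbabilityMeasure μ ∧ μ {p : ℍ | ‖p‖ = 1} = 1

/-- Quantum payoff with payoff vector `X`: `P^Q(p,q) = Σ_t π_t(pq)² X_t`. -/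
def payoff (X : Fin 4 → ℝ) (p q : ℍ) : ℝ :=
  ∑ t : Fin 4, (piQ t (p * q)) ^ 2 * X t

/-- Expected payoff of a pair of mixed strategies. -/
def payoffM (X : Fin 4 → ℝ) (ν μ : Measure ℍ) : ℝ :=
  ∫ p, ∫ q, payoff X p q ∂μ ∂ν

/-- Mixed-strategy Nash equilibrium of the quantum game with payoff vectors `X`, `Y`. -/
def IsNash (X Y : Fin 4 → ℝ) (ν μ : Measure ℍ) : Prop :=
  IsMixed ν ∧ IsMixed μ ∧
    (∀ ν' : Measure ℍ, IsMixed ν' → payoffM X ν' μ ≤ payoffM X ν μ) ∧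
    (∀ μ' : Measure ℍ, IsMixed μ' → payoffM Y ν μ' ≤ payoffM Y ν μ)

/-- Equivalence of mixed quantum strategies. -/
def StratEquiv (μ μ' : Measure ℍ) : Prop :=
  ∀ p : ℍ, ‖p‖ = 1 → ∀ t : Fin 4,
    ∫ q, (piQ t (p * q)) ^ 2 ∂μ = ∫ q, (piQ t (p * q)) ^ 2 ∂μ'

/-- Equivalence of pairs of mixed strategies: `(ν,μ) ∼ (ν',μ')` iff there is a unit
quaternion `u` with `ν' ∼ ν·u` and `μ' ∼ u⁻¹·μ`. -/
def PairEquiv (ν μ ν' μ' : Measure ℍ) : Prop :=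
  ∃ u : ℍ, ‖u‖ = 1 ∧
    StratEquiv (Measure.map (fun p => p * u) ν) ν' ∧
    StratEquiv (Measure.map (fun q => u⁻¹ * q) μ) μ'

/-- A generic two-by-two game: all payoffs distinct and all pairwise sums distinct. -/
def Generic (X Y : Fin 4 → ℝ) : Prop :=
  Function.Injective X ∧ Function.Injective Y ∧
    (∀ s t s' t' : Fin 4, s < t → s' < t' → X s + X t = X s' + X t' → s = s' ∧ t = t') ∧
    (∀ s t s' t' : Fin 4, s < t → s' < t' → Y s + Y t = Y s' + Y t' → s = s' ∧ t = t')

/-- `K(p) = π₁(p)π₂(p)π₃(p)π₄(p)`. -/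
def K (p : ℍ) : ℝ := p.re * p.imI * p.imJ * p.imK

/-- Intertwined quadruple of quaternions. -/
def Intertwined (p q r s : ℍ) : Prop :=
  ∃ α : ℝ, α ≠ 0 ∧ ∀ X Y : ℝ, α * K (X • p + Y • q) = K (X • r + Y • s)

/-- Fully intertwined quadruple of quaternions. -/
def FullyIntertwined (p q r s : ℍ) : Prop :=
  Intertwined p q r s ∧ Intertwined p r q s

/-- `p` is an optimal response for Player One to the mixed strategy `μ`. -/
def Optimal₁ (X : Fin 4 → ℝ) (μ : Measure ℍ) (p : ℍ) : Prop :=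
  ‖p‖ = 1 ∧ ∀ p' : ℍ, ‖p'‖ = 1 → ∫ q, payoff X p' q ∂μ ≤ ∫ q, payoff X p q ∂μ

/-- `q` is an optimal response for Player Two to the mixed strategy `ν`. -/
def Optimal₂ (Y : Fin 4 → ℝ) (ν : Measure ℍ) (q : ℍ) : Prop :=
  ‖q‖ = 1 ∧ ∀ q' : ℍ, ‖q'‖ = 1 → ∫ p, payoff Y p q' ∂ν ≤ ∫ p, payoff Y p q ∂ν

/-!
Payoffs depend on a mixed strategy only through the integrals defining equivalence of strategies.
For the second player's strategy this is the definition; for the first player's it follows from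
`Re (x y) = Re (y x)`, which gives `π_t (p q) = π₁ ((q ē_t) p)` for `e_t ∈ {1, i, j, k}`, so an
integral of `π_t (p q)²` over `p` is one of `π₁ (c p)²` with `c` a unit quaternion. Hence being a
Nash equilibrium passes to equivalent strategies. It is also invariant under
`(ν, μ) ↦ (ν u, u⁻¹ μ)`, because `(p u) (u⁻¹ q) = p q` and translation permutes mixed strategies.
-/

lemma integrable_of_ae_mem_compact {α E : Type*} [TopologicalSpace α] [T2Space α]
    [MeasurableSpace α] [OpensMeasurableSpace α] [NormedAddCommGroup E] {μ : Measure α}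
    [IsFiniteMeasure μ] {K : Set α} (hK : IsCompact K) (hμK : ∀ᵐ x ∂μ, x ∈ K) {f : α → E}
    (hf : Continuous f) : Integrable f μ := by
  have := hf.continuousOn.integrableOn_compact (μ := μ) hK
  rwa [IntegrableOn, Measure.restrict_eq_self_of_ae_mem hμK] at this

namespace MeasureTheory.Measure

variable {M : Type*} [Monoid M] [MeasurableSpace M] [MeasurableMul M] {a b : M}

lemma map_mul_right_map_mul_right_of_mul_eq_one (μ : Measure M) (hab : a * b = 1) :
    (μ.map (· * a)).map (· * b) = μ := by
  rw [map_map (measurable_mul_const b) (measurable_mul_const a)]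
  simp [Function.comp_def, mul_assoc, hab]

lemma map_mul_left_map_mul_left_of_mul_eq_one (μ : Measure M) (hab : a * b = 1) :
    (μ.map (b * ·)).map (a * ·) = μ := by
  rw [map_map (measurable_const_mul a) (measurable_const_mul b)]
  simp [Function.comp_def, ← mul_assoc, hab]

end MeasureTheory.Measure

def quatBasis : Fin 4 → ℍ := ![1, qI, qJ, qK]

lemma norm_quatBasis (t : Fin 4) : ‖quatBasis t‖ = 1 := by
  rw [norm_eq_sqrt_real_inner, Quaternion.inner_self, Quaternion.normSq_def', Real.sqrt_eq_one]
  fin_cases t <;> simp [quatBasis, qI, qJ, qK, Quaternion.re_one, Quaternion.imI_one,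
    Quaternion.imJ_one, Quaternion.imK_one]

lemma piQ_eq_re_mul_star (t : Fin 4) (x : ℍ) : piQ t x = (x * star (quatBasis t)).re := by
  simp only [Quaternion.re_mul, Quaternion.re_star, Quaternion.imI_star, Quaternion.imJ_star,
    Quaternion.imK_star]
  fin_cases t <;> simp [piQ, quatBasis, qI, qJ, qK, Quaternion.re_one, Quaternion.imI_one,
    Quaternion.imJ_one, Quaternion.imK_one]

lemma Quaternion.re_mul_comm {R : Type*} [CommRing R] (x y : Quaternion R) :
    (x * y).re = (y * x).re := by
  simp only [Quaternion.re_mul]; ring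

lemma piQ_mul_eq_piQ_zero (t : Fin 4) (p q : ℍ) :
    piQ t (p * q) = piQ 0 (q * star (quatBasis t) * p) := by
  rw [piQ_eq_re_mul_star, mul_assoc, Quaternion.re_mul_comm]
  rfl

@[fun_prop]
lemma continuous_piQ (t : Fin 4) : Continuous (piQ t) := by
  fin_cases t
  exacts [Quaternion.continuous_re, Quaternion.continuous_imI, Quaternion.continuous_imJ,
    Quaternion.continuous_imK]

@[fun_prop]
lemma continuous_payoff (X : Fin 4 → ℝ) : Continuous fun z : ℍ × ℍ => payoff X z.1 z.2 := by
  unfold payoff; fun_prop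

namespace IsMixed

variable {μ ν : Measure ℍ}

lemma ae_norm_eq_one (hμ : IsMixed μ) : ∀ᵐ p ∂μ, ‖p‖ = 1 := by
  have := hμ.1
  rw [ae_iff_measure_eq, hμ.2, measure_univ]
  exact (isClosed_eq continuous_norm continuous_const).measurableSet.nullMeasurableSet

lemma integrable (hμ : IsMixed μ) {f : ℍ → ℝ} (hf : Continuous f) : Integrable f μ :=
  have := hμ.1
  integrable_of_ae_mem_compact (isCompact_sphere 0 1) (by simpa using hμ.ae_norm_eq_one) hf

lemma integrable_prod (hν : IsMixed ν) (hμ : IsMixed μ) {f : ℍ × ℍ → ℝ} (hf : Continuous f) :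
    Integrable f (ν.prod μ) := by
  have := hν.1; have := hμ.1
  refine integrable_of_ae_mem_compact ((isCompact_sphere 0 1).prod (isCompact_sphere 0 1)) ?_ hf
  filter_upwards [Measure.quasiMeasurePreserving_fst.ae hν.ae_norm_eq_one,
    Measure.quasiMeasurePreserving_snd.ae hμ.ae_norm_eq_one] with z h1 h2
  simp_all

lemma map (hμ : IsMixed μ) {f : ℍ → ℍ} (hf : Measurable f) (hf1 : ∀ p, ‖p‖ = 1 → ‖f p‖ = 1) :
    IsMixed (μ.map f) := by
  have := hμ.1
  refine ⟨Measure.isProbabilityMeasure_map hf.aemeasurable, le_antisymm prob_le_one ?_⟩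
  rw [← hμ.2, Measure.map_apply hf (isClosed_eq continuous_norm continuous_const).measurableSet]
  exact measure_mono hf1

lemma map_mul_right (hμ : IsMixed μ) {u : ℍ} (hu : ‖u‖ = 1) : IsMixed (μ.map (· * u)) :=
  hμ.map (measurable_mul_const u) (by simp [hu])

lemma map_mul_left (hμ : IsMixed μ) {u : ℍ} (hu : ‖u‖ = 1) : IsMixed (μ.map (u * ·)) :=
  hμ.map (measurable_const_mul u) (by simp [hu])

end IsMixed

lemma integral_payoff_eq_sum (X : Fin 4 → ℝ) {μ : Measure ℍ} (hμ : IsMixed μ) {a b : ℍ → ℍ}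
    (ha : Continuous a) (hb : Continuous b) :
    ∫ x, payoff X (a x) (b x) ∂μ = ∑ t, (∫ x, piQ t (a x * b x) ^ 2 ∂μ) * X t := by
  simp only [payoff]
  rw [integral_finsetSum _ fun t _ => (hμ.integrable (by fun_prop)).mul_const _]
  simp only [integral_mul_const]

lemma payoffM_eq_integral_integral_swap (X : Fin 4 → ℝ) {ν μ : Measure ℍ} (hν : IsMixed ν)
    (hμ : IsMixed μ) : payoffM X ν μ = ∫ q, ∫ p, payoff X p q ∂ν ∂μ :=
  have := hν.1; have := hμ.1
  integral_integral_swap (hν.integrable_prod hμ (continuous_payoff X))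

namespace StratEquiv

variable {μ μ' : Measure ℍ}

lemma symm (h : StratEquiv μ μ') : StratEquiv μ' μ := fun p hp t => (h p hp t).symm

lemma integral_piQ_sq_mul_right (h : StratEquiv μ μ') {q : ℍ} (hq : ‖q‖ = 1) (t : Fin 4) :
    ∫ p, piQ t (p * q) ^ 2 ∂μ = ∫ p, piQ t (p * q) ^ 2 ∂μ' := by
  have hc : ‖q * star (quatBasis t)‖ = 1 := by
    rw [norm_mul, Quaternion.norm_star, norm_quatBasis, hq, one_mul]
  simp only [piQ_mul_eq_piQ_zero t _ q]
  exact h _ hc 0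

lemma integral_payoff_left_eq (h : StratEquiv μ μ') (hμ : IsMixed μ) (hμ' : IsMixed μ')
    (X : Fin 4 → ℝ) {p : ℍ} (hp : ‖p‖ = 1) :
    ∫ q, payoff X p q ∂μ = ∫ q, payoff X p q ∂μ' := by
  rw [integral_payoff_eq_sum X hμ continuous_const continuous_id',
    integral_payoff_eq_sum X hμ' continuous_const continuous_id']
  simp only [h p hp]

lemma integral_payoff_right_eq (h : StratEquiv μ μ') (hμ : IsMixed μ) (hμ' : IsMixed μ')
    (X : Fin 4 → ℝ) {q : ℍ} (hq : ‖q‖ = 1) :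
    ∫ p, payoff X p q ∂μ = ∫ p, payoff X p q ∂μ' := by
  rw [integral_payoff_eq_sum X hμ continuous_id' continuous_const,
    integral_payoff_eq_sum X hμ' continuous_id' continuous_const]
  simp only [h.integral_piQ_sq_mul_right hq]

lemma payoffM_right_eq (h : StratEquiv μ μ') (hμ : IsMixed μ) (hμ' : IsMixed μ')
    (X : Fin 4 → ℝ) {ν : Measure ℍ} (hν : IsMixed ν) : payoffM X ν μ = payoffM X ν μ' :=
  integral_congr_ae (hν.ae_norm_eq_one.mono fun _ hp => h.integral_payoff_left_eq hμ hμ' X hp)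

lemma payoffM_left_eq (h : StratEquiv μ μ') (hμ : IsMixed μ) (hμ' : IsMixed μ')
    (X : Fin 4 → ℝ) {ν : Measure ℍ} (hν : IsMixed ν) : payoffM X μ ν = payoffM X μ' ν := by
  rw [payoffM_eq_integral_integral_swap X hμ hν, payoffM_eq_integral_integral_swap X hμ' hν]
  exact integral_congr_ae
    (hν.ae_norm_eq_one.mono fun _ hq => h.integral_payoff_right_eq hμ hμ' X hq)

end StratEquiv

lemma IsNash.of_stratEquiv {X Y : Fin 4 → ℝ} {ν μ ν' μ' : Measure ℍ} (h : IsNash X Y ν μ)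
    (hν' : IsMixed ν') (hμ' : IsMixed μ') (hνν' : StratEquiv ν ν') (hμμ' : StratEquiv μ μ') :
    IsNash X Y ν' μ' := by
  obtain ⟨hν, hμ, hX, hY⟩ := h
  refine ⟨hν', hμ', fun ξ hξ => ?_, fun η hη => ?_⟩
  · calc payoffM X ξ μ' = payoffM X ξ μ := (hμμ'.payoffM_right_eq hμ hμ' X hξ).symm
      _ ≤ payoffM X ν μ := hX ξ hξ
      _ = payoffM X ν' μ := hνν'.payoffM_left_eq hν hν' X hμ
      _ = payoffM X ν' μ' := hμμ'.payoffM_right_eq hμ hμ' X hν'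
  · calc payoffM Y ν' η = payoffM Y ν η := (hνν'.payoffM_left_eq hν hν' Y hη).symm
      _ ≤ payoffM Y ν μ := hY η hη
      _ = payoffM Y ν' μ := hνν'.payoffM_left_eq hν hν' Y hμ
      _ = payoffM Y ν' μ' := hμμ'.payoffM_right_eq hμ hμ' Y hν'

lemma isNash_iff_of_stratEquiv {X Y : Fin 4 → ℝ} {ν μ ν' μ' : Measure ℍ} (hν : IsMixed ν)
    (hμ : IsMixed μ) (hν' : IsMixed ν') (hμ' : IsMixed μ') (hνν' : StratEquiv ν ν')
    (hμμ' : StratEquiv μ μ') : IsNash X Y ν μ ↔ IsNash X Y ν' μ' :=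
  ⟨fun h => h.of_stratEquiv hν' hμ' hνν' hμμ', fun h => h.of_stratEquiv hν hμ hνν'.symm hμμ'.symm⟩

lemma payoffM_map_mul_right_map_inv_mul (X : Fin 4 → ℝ) (ν μ : Measure ℍ) {u : ℍ} (hu : u ≠ 0) :
    payoffM X (ν.map (· * u)) (μ.map (u⁻¹ * ·)) = payoffM X ν μ := by
  simp only [payoffM, (measurableEmbedding_mulRight₀ hu).integral_map,
    (measurableEmbedding_mulLeft₀ (inv_ne_zero hu)).integral_map, payoff, mul_assoc,
    mul_inv_cancel_left₀ hu]

lemma IsNash.map_mul_right_map_inv_mul {X Y : Fin 4 → ℝ} {ν μ : Measure ℍ} (h : IsNash X Y ν μ)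
    {u : ℍ} (hu : ‖u‖ = 1) : IsNash X Y (ν.map (· * u)) (μ.map (u⁻¹ * ·)) := by
  obtain ⟨hν, hμ, hX, hY⟩ := h
  have hu₀ : u ≠ 0 := norm_ne_zero_iff.1 (by simp [hu])
  have hu' : ‖u⁻¹‖ = 1 := by simp [hu]
  refine ⟨hν.map_mul_right hu, hμ.map_mul_left hu', fun ξ hξ => ?_, fun η hη => ?_⟩
  · calc payoffM X ξ (μ.map (u⁻¹ * ·))
        = payoffM X ((ξ.map (· * u⁻¹)).map (· * u)) (μ.map (u⁻¹ * ·)) := by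
          rw [Measure.map_mul_right_map_mul_right_of_mul_eq_one ξ (inv_mul_cancel₀ hu₀)]
      _ = payoffM X (ξ.map (· * u⁻¹)) μ := payoffM_map_mul_right_map_inv_mul X _ μ hu₀
      _ ≤ payoffM X ν μ := hX _ (hξ.map_mul_right hu')
      _ = payoffM X (ν.map (· * u)) (μ.map (u⁻¹ * ·)) :=
          (payoffM_map_mul_right_map_inv_mul X ν μ hu₀).symm
  · calc payoffM Y (ν.map (· * u)) η
        = payoffM Y (ν.map (· * u)) ((η.map (u * ·)).map (u⁻¹ * ·)) := by
          rw [Measure.map_mul_left_map_mul_left_of_mul_eq_one η (inv_mul_cancel₀ hu₀)]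
      _ = payoffM Y ν (η.map (u * ·)) := payoffM_map_mul_right_map_inv_mul Y ν _ hu₀
      _ ≤ payoffM Y ν μ := hY _ (hη.map_mul_left hu)
      _ = payoffM Y (ν.map (· * u)) (μ.map (u⁻¹ * ·)) :=
          (payoffM_map_mul_right_map_inv_mul Y ν μ hu₀).symm

lemma isNash_map_mul_right_map_inv_mul_iff {X Y : Fin 4 → ℝ} {ν μ : Measure ℍ} {u : ℍ}
    (hu : ‖u‖ = 1) : IsNash X Y (ν.map (· * u)) (μ.map (u⁻¹ * ·)) ↔ IsNash X Y ν μ := by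
  refine ⟨fun h => ?_, fun h => h.map_mul_right_map_inv_mul hu⟩
  have hu₀ : u ≠ 0 := norm_ne_zero_iff.1 (by simp [hu])
  have := h.map_mul_right_map_inv_mul (u := u⁻¹) (by simp [hu])
  rwa [Measure.map_mul_right_map_mul_right_of_mul_eq_one ν (mul_inv_cancel₀ hu₀), inv_inv,
    Measure.map_mul_left_map_mul_left_of_mul_eq_one μ (mul_inv_cancel₀ hu₀)] at this

/-- If `(ν,μ)` and `(ν',μ')` are equivalent pairs of mixed strategies, then
`(ν,μ)` is a Nash equilibrium of `G^Q` iff `(ν',μ')` is. -/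
theorem nash_iff_of_pairEquiv (X Y : Fin 4 → ℝ) (ν μ ν' μ' : Measure ℍ)
    (hν : IsMixed ν) (hμ : IsMixed μ) (hν' : IsMixed ν') (hμ' : IsMixed μ')
    (hpair : PairEquiv ν μ ν' μ') :
    IsNash X Y ν μ ↔ IsNash X Y ν' μ' := by
  obtain ⟨u, hu, hν_equiv, hμ_equiv⟩ := hpair
  have hu' : ‖u⁻¹‖ = 1 := by simp [hu]
  rw [← isNash_map_mul_right_map_inv_mul_iff hu]
  exact isNash_iff_of_stratEquiv (hν.map_mul_right hu) (hμ.map_mul_left hu') hν' hμ'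
    hν_equiv hμ_equiv
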